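/- With the notation of the context, I(w) = −(1/(ac))·I(h₂ − h₄ + h₅), where w(t,s) = 1/(t(s−y)). -/

import Mathlib

open MeasureTheory

/-- The Dotsenko–Fateev weight `Φ(t,s) = |t|^a|s|^a|t−1|^b|s−1|^b|t−x|^c|s−y|^c|t−s|^g`. -/
noncomputable def dfWeight (a b c g x y : ℝ) (p : ℝ × ℝ) : ℝ :=
  |p.1| ^ a * |p.2| ^ a * |p.1 - 1| ^ b * |p.2 - 1| ^ b *
    |p.1 - x| ^ c * |p.2 - y| ^ c * |p.1 - p.2| ^ g

/-- The complement in `ℝ²` of the seven lines `t=0, t=1, t=x, s=0, s=1, s=y, t=s`. -/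
def dfComplement (x y : ℝ) : Set (ℝ × ℝ) :=
  {p | p.1 ≠ 0 ∧ p.1 ≠ 1 ∧ p.1 ≠ x ∧ p.2 ≠ 0 ∧ p.2 ≠ 1 ∧ p.2 ≠ y ∧ p.1 ≠ p.2}

/-- `I(h) = ∫_σ Φ h`. -/
noncomputable def dfInt (a b c g x y : ℝ) (σ : Set (ℝ × ℝ)) (h : ℝ × ℝ → ℝ) : ℝ :=
  ∫ p in σ, dfWeight a b c g x y p * h p

/-- `h₁ = bc/((t−x)(s−1))`. -/
noncomputable def h1 (b c x : ℝ) (p : ℝ × ℝ) : ℝ := b * c / ((p.1 - x) * (p.2 - 1))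

/-- `h₂ = bc/((t−1)(s−y))`. -/
noncomputable def h2 (b c y : ℝ) (p : ℝ × ℝ) : ℝ := b * c / ((p.1 - 1) * (p.2 - y))

/-- `h₃ = −cg/((t−x)(t−s))`. -/
noncomputable def h3 (c g x : ℝ) (p : ℝ × ℝ) : ℝ := -(c * g) / ((p.1 - x) * (p.1 - p.2))

/-- `h₄ = −cg/((s−y)(t−s))`. -/
noncomputable def h4 (c g y : ℝ) (p : ℝ × ℝ) : ℝ := -(c * g) / ((p.2 - y) * (p.1 - p.2))

/-- `h₅ = c²/((t−x)(s−y))`. -/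
noncomputable def h5 (c x y : ℝ) (p : ℝ × ℝ) : ℝ := c ^ 2 / ((p.1 - x) * (p.2 - y))

/-- `h₆ = −bg/((t−1)(t−s)) − bg/((s−1)(t−s))`. -/
noncomputable def h6 (b g : ℝ) (p : ℝ × ℝ) : ℝ :=
  -(b * g) / ((p.1 - 1) * (p.1 - p.2)) - b * g / ((p.2 - 1) * (p.1 - p.2))

/-- `h₇ = b²/((t−1)(s−1)) + bg/((s−1)(t−s))`. -/
noncomputable def h7 (b g : ℝ) (p : ℝ × ℝ) : ℝ :=
  b ^ 2 / ((p.1 - 1) * (p.2 - 1)) + b * g / ((p.2 - 1) * (p.1 - p.2))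

/-!
Since `∂ₜ|t - r|^e = e |t - r|^e / (t - r)`, the `t`-derivative of `Φ · c/(s - y)` is
`Φ · (a c w + h₂ - h₄ + h₅)`. The chamber `σ` is cut out by sign conditions on the seven affine
forms, so it is convex and each horizontal slice is an open interval whose endpoints lie on the
arrangement, where `Φ` vanishes. By Fubini and the fundamental theorem of calculus on each
slice, the integral of this derivative over `σ` is zero. Because all exponents exceed `1`, both
`Φ w` and the derivative extend continuously across the lines, so they are integrable on the
bounded `σ`.
-/

open Set Bornology

lemma abs_rpow_sub_two_mul_self (p u : ℝ) : |u| ^ (p - 2) * u = |u| ^ p / u := by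
  rcases eq_or_ne u 0 with rfl | hu
  · simp
  rw [eq_div_iff hu, mul_assoc, ← sq, ← sq_abs, ← Real.rpow_natCast, Nat.cast_ofNat,
    ← Real.rpow_add (abs_pos.2 hu), sub_add_cancel]

lemma hasDerivAt_abs_rpow' {p : ℝ} (hp : 1 < p) (u : ℝ) :
    HasDerivAt (fun v : ℝ => |v| ^ p) (p * (|u| ^ p / u)) u := by
  simpa only [mul_assoc, abs_rpow_sub_two_mul_self] using hasDerivAt_abs_rpow u hp

lemma continuous_abs_rpow_div {p : ℝ} (hp : 1 < p) : Continuous fun u : ℝ => |u| ^ p / u := by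
  have h := (contDiff_norm_rpow (E := ℝ) hp).continuous_deriv le_rfl
  simp only [Real.norm_eq_abs] at h
  rw [funext fun u => (hasDerivAt_abs_rpow' hp u).deriv] at h
  simpa [(by linarith : p ≠ 0)] using h.div_const p

@[fun_prop]
lemma Continuous.abs_rpow_div {α : Type*} [TopologicalSpace α] {f : α → ℝ} (hf : Continuous f)
    {p : ℝ} (hp : 1 < p) : Continuous fun q => |f q| ^ p / f q :=
  (continuous_abs_rpow_div hp).comp hf

lemma setIntegral_deriv_eq_zero {A : Set ℝ} (hA : IsOpen A) (hAb : IsBounded A)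
    (hAc : A.OrdConnected) {G G' : ℝ → ℝ} (hG : ∀ t, HasDerivAt G (G' t) t)
    (hG' : Continuous G') (hfr : ∀ z ∈ frontier A, G z = 0) : ∫ t in A, G' t = 0 := by
  rcases A.eq_empty_or_nonempty with rfl | hne
  · simp
  obtain ⟨hbelow, habove⟩ := isBounded_iff_bddBelow_bddAbove.1 hAb
  have hA_eq : A = Ioo (sInf A) (sSup A) :=
    (interior_Icc (a := sInf A) ▸
        interior_maximal (subset_Icc_csInf_csSup hbelow habove) hA).antisymm
      (IsConnected.Ioo_csInf_csSup_subset ⟨hne, hAc.isPreconnected⟩ hbelow habove)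
  rw [hA_eq] at hfr ⊢
  rcases lt_or_ge (sInf A) (sSup A) with hlt | hge
  · rw [frontier_Ioo hlt] at hfr
    rw [← integral_Ioc_eq_integral_Ioo, ← intervalIntegral.integral_of_le hlt.le,
      intervalIntegral.integral_eq_sub_of_hasDerivAt (fun t _ => hG t)
        (hG'.intervalIntegrable _ _),
      hfr _ (by simp), hfr _ (by simp), sub_zero]
  · simp [Ioo_eq_empty_of_le hge]

lemma Continuous.integrableOn_of_isBounded {X E : Type*} [MetricSpace X] [ProperSpace X]
    [MeasurableSpace X] [OpensMeasurableSpace X] {μ : Measure X} [IsFiniteMeasureOnCompacts μ]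
    [NormedAddCommGroup E] {f : X → E} (hf : Continuous f) {s : Set X} (hs : IsBounded s) :
    IntegrableOn f s μ :=
  (hf.continuousOn.integrableOn_compact hs.isCompact_closure).mono_set subset_closure

lemma setIntegral_partialDeriv_fst_eq_zero {σ : Set (ℝ × ℝ)} (hσ : IsOpen σ)
    (hbd : IsBounded σ) (hconv : Convex ℝ σ) {G G' : ℝ × ℝ → ℝ}
    (hG : ∀ t s, HasDerivAt (fun t => G (t, s)) (G' (t, s)) t) (hG' : Continuous G')
    (hfr : ∀ q ∈ frontier σ, G q = 0) : ∫ q in σ, G' q = 0 := by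
  have hint : Integrable (σ.indicator G') (volume.prod volume) := by
    rw [← Measure.volume_eq_prod, integrable_indicator_iff hσ.measurableSet]
    exact hG'.integrableOn_of_isBounded hbd
  have hslice : ∀ s, ∫ t, σ.indicator G' (t, s) = 0 := fun s => by
    have hmk : Continuous fun t : ℝ => (t, s) := by fun_prop
    have hA : IsOpen ((fun t => (t, s)) ⁻¹' σ) := hσ.preimage hmk
    have hAc : ((fun t => (t, s)) ⁻¹' σ).OrdConnected := ⟨fun t₁ h₁ t₂ h₂ t ht =>
      hconv.segment_subset h₁ h₂
        (Prod.image_mk_segment_left (𝕜 := ℝ) t₁ t₂ s ▸ mem_image_of_mem _ (Icc_subset_segment ht))⟩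
    rw [show (fun t => σ.indicator G' (t, s)) =
        ((fun t => (t, s)) ⁻¹' σ).indicator (G' ∘ fun t => (t, s)) from
      funext fun t => (indicator_comp_right _).symm, integral_indicator hA.measurableSet]
    exact setIntegral_deriv_eq_zero hA (hbd.image_fst.subset fun t ht => ⟨(t, s), ht, rfl⟩) hAc
      (hG · s) (hG'.comp hmk) fun z hz => hfr _ (hmk.frontier_preimage_subset σ hz)
  rw [← integral_indicator hσ.measurableSet, Measure.volume_eq_prod,
    integral_prod_symm _ hint]
  simp [hslice]

section Arrangement

variable {E ι : Type*} [AddCommGroup E] [Module ℝ E]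

def signChamber (f : ι → E →ᵃ[ℝ] ℝ) (p : E) : Set E := {q | ∀ i, 0 < f i p * f i q}

lemma convex_signChamber (f : ι → E →ᵃ[ℝ] ℝ) (p : E) : Convex ℝ (signChamber f p) := by
  simp only [signChamber, ofPred_forall]
  exact convex_iInter fun i => (convex_Ioi 0).affine_preimage (f i p • f i)

variable [TopologicalSpace E]

lemma connectedComponentIn_subset_signChamber (f : ι → E →ᵃ[ℝ] ℝ) (hf : ∀ i, Continuous (f i))
    (p : E) : connectedComponentIn {q | ∀ i, f i q ≠ 0} p ⊆ signChamber f p := by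
  intro q hq i
  have hC := isPreconnected_connectedComponentIn (F := {q | ∀ i, f i q ≠ 0}) (x := p)
  have hp := mem_connectedComponentIn (connectedComponentIn_nonempty_iff.1 ⟨q, hq⟩)
  have hne : ∀ z ∈ connectedComponentIn _ p, f i z ≠ 0 :=
    fun z hz => (connectedComponentIn_subset {q | ∀ i, f i q ≠ 0} p hz : _) i
  by_contra h
  rcases mul_nonpos_iff.1 (not_lt.1 h) with ⟨hfp, hfq⟩ | ⟨hfp, hfq⟩
  · obtain ⟨z, hz, hz0⟩ := hC.intermediate_value hq hp (hf i).continuousOn ⟨hfq, hfp⟩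
    exact hne z hz hz0
  · obtain ⟨z, hz, hz0⟩ := hC.intermediate_value hp hq (hf i).continuousOn ⟨hfp, hfq⟩
    exact hne z hz hz0

lemma connectedComponentIn_eq_signChamber [IsTopologicalAddGroup E] [ContinuousSMul ℝ E]
    (f : ι → E →ᵃ[ℝ] ℝ) (hf : ∀ i, Continuous (f i)) {p : E} (hp : ∀ i, f i p ≠ 0) :
    connectedComponentIn {q | ∀ i, f i q ≠ 0} p = signChamber f p :=
  (connectedComponentIn_subset_signChamber f hf p).antisymm <|
    (convex_signChamber f p).isPreconnected.subset_connectedComponentIn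
      (fun i => mul_self_pos.2 (hp i)) fun _ hq i => right_ne_zero_of_mul (hq i).ne'

end Arrangement

lemma disjoint_frontier_connectedComponentIn {α : Type*} [TopologicalSpace α]
    [LocallyConnectedSpace α] {U : Set α} (hU : IsOpen U) (p : α) :
    Disjoint (frontier (connectedComponentIn U p)) U := by
  rw [hU.connectedComponentIn.frontier_eq, disjoint_left]
  rintro z ⟨hzC, hz⟩ hzU
  obtain ⟨w, hwz, hwp⟩ :=
    mem_closure_iff.1 hzC _ hU.connectedComponentIn (mem_connectedComponentIn hzU)
  rw [connectedComponentIn_eq hwp, ← connectedComponentIn_eq hwz] at hz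
  exact hz (mem_connectedComponentIn hzU)

def dfForm (x y : ℝ) : Fin 7 → ℝ × ℝ →ᵃ[ℝ] ℝ :=
  ![AffineMap.fst, AffineMap.fst - AffineMap.const ℝ _ 1, AffineMap.fst - AffineMap.const ℝ _ x,
    AffineMap.snd, AffineMap.snd - AffineMap.const ℝ _ 1, AffineMap.snd - AffineMap.const ℝ _ y,
    AffineMap.fst - AffineMap.snd]

lemma dfComplement_eq (x y : ℝ) : dfComplement x y = {q | ∀ i, dfForm x y i q ≠ 0} := by
  ext q
  simp [dfComplement, dfForm, Fin.forall_fin_succ, sub_ne_zero]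

lemma isOpen_dfComplement (x y : ℝ) : IsOpen (dfComplement x y) := by
  rw [dfComplement_eq, ofPred_forall]
  exact isOpen_iInter_of_finite fun i =>
    isOpen_ne_fun (dfForm x y i).continuous_of_finiteDimensional continuous_const

lemma convex_connectedComponentIn_dfComplement {x y : ℝ} {p : ℝ × ℝ}
    (hp : p ∈ dfComplement x y) : Convex ℝ (connectedComponentIn (dfComplement x y) p) := by
  rw [dfComplement_eq] at hp ⊢
  rw [connectedComponentIn_eq_signChamber _
    (fun i => (dfForm x y i).continuous_of_finiteDimensional) hp]
  exact convex_signChamber _ p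

section DotsenkoFateev

variable {a b c g : ℝ} (x y : ℝ)

lemma dfWeight_eq_zero_of_notMem (ha : a ≠ 0) (hb : b ≠ 0) (hc : c ≠ 0) (hg : g ≠ 0)
    {q : ℝ × ℝ} (hq : q ∉ dfComplement x y) : dfWeight a b c g x y q = 0 := by
  simp only [dfComplement, mem_ofPred_eq, not_and_or, not_not] at hq
  rcases hq with h | h | h | h | h | h | h <;> simp [dfWeight, Real.zero_rpow, *]

noncomputable def dfPartialFst (a b c g x y : ℝ) (q : ℝ × ℝ) : ℝ :=
  dfWeight a b c g x y q *
    (a * c * (1 / (q.1 * (q.2 - y))) + (h2 b c y q - h4 c g y q + h5 c x y q))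

/-- Every singular factor is grouped as `|u| ^ e / u`, which is continuous for `e > 1`. -/
lemma dfPartialFst_eq (q : ℝ × ℝ) : dfPartialFst a b c g x y q =
    (a * (|q.1| ^ a / q.1) * |q.1 - 1| ^ b * |q.1 - x| ^ c * |q.1 - q.2| ^ g +
      |q.1| ^ a * (b * (|q.1 - 1| ^ b / (q.1 - 1))) * |q.1 - x| ^ c * |q.1 - q.2| ^ g +
      |q.1| ^ a * |q.1 - 1| ^ b * (c * (|q.1 - x| ^ c / (q.1 - x))) * |q.1 - q.2| ^ g +
      |q.1| ^ a * |q.1 - 1| ^ b * |q.1 - x| ^ c * (g * (|q.1 - q.2| ^ g / (q.1 - q.2)))) *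
    (|q.2| ^ a * |q.2 - 1| ^ b * (c * (|q.2 - y| ^ c / (q.2 - y)))) := by
  simp only [dfPartialFst, dfWeight, h2, h4, h5, div_eq_mul_inv, mul_inv]
  ring

lemma hasDerivAt_dfWeight_mul_fst (ha : 1 < a) (hb : 1 < b) (hc : 1 < c) (hg : 1 < g)
    (t s : ℝ) : HasDerivAt (fun t => dfWeight a b c g x y (t, s) * (c / (s - y)))
      (dfPartialFst a b c g x y (t, s)) t := by
  have hA := hasDerivAt_abs_rpow' ha t
  have hB := (hasDerivAt_abs_rpow' hb (t - 1)).comp t ((hasDerivAt_id t).sub_const 1)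
  have hC := (hasDerivAt_abs_rpow' hc (t - x)).comp t ((hasDerivAt_id t).sub_const x)
  have hG := (hasDerivAt_abs_rpow' hg (t - s)).comp t ((hasDerivAt_id t).sub_const s)
  have H := (((hA.mul hB).mul hC).mul hG).mul_const
    (|s| ^ a * |s - 1| ^ b * (c * (|s - y| ^ c / (s - y))))
  refine (H.congr_deriv ?_).congr_of_eventuallyEq (.of_forall fun t => ?_)
  · rw [dfPartialFst_eq]
    simp only [Pi.mul_apply, Function.comp_apply, id, mul_one]
    ring
  · simp only [dfWeight, Pi.mul_apply, Function.comp_apply, id]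
    ring

lemma continuous_dfPartialFst (ha : 1 < a) (hb : 1 < b) (hc : 1 < c) (hg : 1 < g) :
    Continuous (dfPartialFst a b c g x y) := by
  rw [funext (dfPartialFst_eq x y)]
  fun_prop (disch := linarith)

lemma continuous_dfWeight_mul_omega16 (ha : 1 < a) (hb : 0 ≤ b) (hc : 1 < c) (hg : 0 ≤ g) :
    Continuous fun q : ℝ × ℝ => dfWeight a b c g x y q * (1 / (q.1 * (q.2 - y))) := by
  have : (fun q : ℝ × ℝ => dfWeight a b c g x y q * (1 / (q.1 * (q.2 - y)))) = fun q =>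
      |q.1| ^ a / q.1 * |q.2| ^ a * |q.1 - 1| ^ b * |q.2 - 1| ^ b * |q.1 - x| ^ c *
        (|q.2 - y| ^ c / (q.2 - y)) * |q.1 - q.2| ^ g := by
    ext q
    simp only [dfWeight, div_eq_mul_inv, mul_inv]
    ring
  rw [this]
  fun_prop (disch := linarith)

end DotsenkoFateev

theorem expansion_omega16_general (x y a b c g : ℝ)
    (ha : 1 < a) (hb : 1 < b) (hc : 1 < c) (hg : 1 < g)
    (σ : Set (ℝ × ℝ)) (hbd : Bornology.IsBounded σ)
    (hcc : ∃ p ∈ dfComplement x y, σ = connectedComponentIn (dfComplement x y) p) :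
    dfInt a b c g x y σ (fun p => 1 / (p.1 * (p.2 - y))) =
      -(1 / (a * c)) * dfInt a b c g x y σ (fun p => h2 b c y p - h4 c g y p + h5 c x y p) := by
  obtain ⟨p, hp, hσp⟩ := hcc
  have hU := isOpen_dfComplement x y
  have hfr : Disjoint (frontier σ) (dfComplement x y) :=
    hσp ▸ disjoint_frontier_connectedComponentIn hU p
  have hvanish : ∫ q in σ, dfPartialFst a b c g x y q = 0 :=
    setIntegral_partialDeriv_fst_eq_zero (G := fun q => dfWeight a b c g x y q * (c / (q.2 - y)))
      (hσp ▸ hU.connectedComponentIn) hbd (hσp ▸ convex_connectedComponentIn_dfComplement hp)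
      (hasDerivAt_dfWeight_mul_fst x y ha hb hc hg) (continuous_dfPartialFst x y ha hb hc hg)
      fun q hq => by
        rw [dfWeight_eq_zero_of_notMem x y (by positivity) (by positivity) (by positivity)
          (by positivity) (hfr.notMem_of_mem_left hq), zero_mul]
  have hw : IntegrableOn (fun q => dfWeight a b c g x y q * (1 / (q.1 * (q.2 - y)))) σ :=
    (continuous_dfWeight_mul_omega16 x y ha (by positivity) hc
      (by positivity)).integrableOn_of_isBounded hbd
  have hD : IntegrableOn (dfPartialFst a b c g x y) σ :=
    (continuous_dfPartialFst x y ha hb hc hg).integrableOn_of_isBounded hbd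
  have hh : dfInt a b c g x y σ (fun p => h2 b c y p - h4 c g y p + h5 c x y p) =
      -(a * c) * dfInt a b c g x y σ (fun p => 1 / (p.1 * (p.2 - y))) :=
    calc _ = ∫ q in σ, (dfPartialFst a b c g x y q -
          a * c * (dfWeight a b c g x y q * (1 / (q.1 * (q.2 - y))))) := by
          simp only [dfInt, dfPartialFst]
          congr 1
          ext q
          ring
      _ = _ := by
          rw [integral_sub hD (hw.const_mul _), integral_const_mul, hvanish, dfInt]
          ring
  rw [hh]
  field_simp

/-- the cohomological expansion ω₁₆ ∼ −(1/(ac))(η₂−η₄+η₅)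
integrated over a bounded chamber `σ` of the Dotsenko–Fateev arrangement. -/
theorem expansion_omega16 (x y a b c g : ℝ)
    (hx0 : x ≠ 0) (hx1 : x ≠ 1) (hy0 : y ≠ 0) (hy1 : y ≠ 1) (hxy : x ≠ y)
    (ha : 1 < a) (hb : 1 < b) (hc : 1 < c) (hg : 1 < g)
    (σ : Set (ℝ × ℝ)) (hbd : Bornology.IsBounded σ)
    (hcc : ∃ p ∈ dfComplement x y, σ = connectedComponentIn (dfComplement x y) p) :
    dfInt a b c g x y σ (fun p => 1 / (p.1 * (p.2 - y))) =
      -(1 / (a * c)) * dfInt a b c g x y σ (fun p => h2 b c y p - h4 c g y p + h5 c x y p) :=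
  expansion_omega16_general x y a b c g ha hb hc hg σ hbd hcc
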